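/- arXiv:2308.02610 — 5 statements merged into one kernel-verified Lean document; each statement's English description precedes it below -/
import Mathlib

section
/- Let A be an m×n integer matrix, let r be the rank of A (as a matrix over ℚ), and let M = ℤⁿ/U, where U ⊆ ℤⁿ is the subgroup generated by the rows of A. Then the torsion subgroup T of M is a finite group, and the exponent of T divides the determinant of every r×r submatrix of A whose determinant is non-zero. In particular, the exponent of T is bounded by the absolute value of any non-zero maximal-rank minor of A. -/
/-!
If `a • x` lies in the row lattice `U` of `A` for some `a ≠ 0`, then `x` lies in the rational
row space of `A`. A nonzero `r × r` minor `B = A[rows, cols]` makes the rows indexed by `rows` a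
basis of that space, so `x = c ᵥ* A[rows, :]` with rational `c`. Restricting to the columns `cols`
gives `x[cols] = c ᵥ* B`, and then `x[cols] ᵥ* adj B = det B • c` shows that `det B • c` is
integral. Hence `det B • x ∈ U`: the minor kills the torsion of `ℤⁿ / U`, which is finite as a
finitely generated torsion group.
-/

open Matrix Submodule Set

namespace Matrix

variable {R K m n r : Type*} [Fintype m] [Fintype r] [DecidableEq r]

theorem map_mem_span_row_of_smul_mem_span_row [CommRing R] [Field K] (f : R →+* K)
    (A : Matrix m n R) {a : R} (ha : f a ≠ 0) {x : n → R}
    (hx : a • x ∈ span R (range A.row)) :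
    f ∘ x ∈ span K (range (A.map f).row) := by
  rw [← range_vecMulLinear] at hx ⊢
  obtain ⟨c, hc : c ᵥ* A = a • x⟩ := hx
  refine ⟨(f a)⁻¹ • (f ∘ c), funext fun j => ?_⟩
  rw [vecMulLinear_apply, smul_vecMul, Pi.smul_apply, ← RingHom.map_vecMul]
  simp [hc, ha]

theorem span_row_comp_eq_span_row_of_det_ne_zero [Field K] [Fintype n] {A : Matrix m n K}
    {rows : r → m} {cols : r → n} (hrank : A.rank = Fintype.card r)
    (hdet : (A.submatrix rows cols).det ≠ 0) :
    span K (range (A.row ∘ rows)) = span K (range A.row) := by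
  have hli : LinearIndependent K (A.row ∘ rows) :=
    .of_comp (LinearMap.funLeft K K cols) (linearIndependent_rows_of_det_ne_zero hdet)
  refine eq_of_le_of_finrank_eq (span_mono (range_comp_subset_range _ _)) ?_
  rw [finrank_span_eq_card hli, ← rank_eq_finrank_span_row, hrank]

theorem det_smul_mem_span_row_of_map_mem_span_row [CommRing R] [CommRing K] {f : R →+* K}
    (hf : Function.Injective f) (A : Matrix r n R) (cols : r → n) {x : n → R}
    (hx : f ∘ x ∈ span K (range (A.map f).row)) :
    (A.submatrix id cols).det • x ∈ span R (range A.row) := by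
  set B := A.submatrix id cols
  rw [← range_vecMulLinear] at hx ⊢
  obtain ⟨c, hc : c ᵥ* A.map f = f ∘ x⟩ := hx
  have hcB : c ᵥ* B.map f = f ∘ x ∘ cols := by
    funext k
    exact congrFun hc (cols k)
  refine ⟨(x ∘ cols) ᵥ* B.adjugate, ?_⟩
  have hcoef : f ∘ ((x ∘ cols) ᵥ* B.adjugate) = f B.det • c := by
    funext i
    rw [Function.comp_apply, RingHom.map_vecMul, ← RingHom.mapMatrix_apply, RingHom.map_adjugate,
      ← hcB, vecMul_vecMul, RingHom.mapMatrix_apply, mul_adjugate, ← RingHom.mapMatrix_apply,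
      ← f.map_det, vecMul_smul, vecMul_one]
  funext j
  apply hf
  rw [vecMulLinear_apply, RingHom.map_vecMul, hcoef, smul_vecMul, hc]
  simp

theorem det_smul_mem_span_row_of_smul_mem_span_row [CommRing R] [Field K] [Fintype n]
    {f : R →+* K} (hf : Function.Injective f) {A : Matrix m n R} {rows : r → m} {cols : r → n}
    (hrank : (A.map f).rank = Fintype.card r) (hdet : (A.submatrix rows cols).det ≠ 0)
    {a : R} (ha : a ≠ 0) {x : n → R} (hx : a • x ∈ span R (range A.row)) :
    (A.submatrix rows cols).det • x ∈ span R (range A.row) := by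
  have hdetK : ((A.map f).submatrix rows cols).det ≠ 0 := by
    rw [submatrix_map, ← RingHom.mapMatrix_apply, ← f.map_det]
    exact (map_ne_zero_iff f hf).2 hdet
  have hxK := map_mem_span_row_of_smul_mem_span_row f A ((map_ne_zero_iff f hf).2 ha) hx
  rw [← span_row_comp_eq_span_row_of_det_ne_zero hrank hdetK] at hxK
  exact span_mono (range_comp_subset_range _ _)
    (det_smul_mem_span_row_of_map_mem_span_row hf (A.submatrix rows id) cols hxK)

end Matrix

/-- For an `m × n` integer matrix `A` of rank `r` (over `ℚ`), with
`M = ℤⁿ / (row span of A)`, the torsion subgroup `T` of `M` is finite and its exponent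
divides every non-zero `r × r` minor of `A`. -/
theorem torsion_exponent_dvd_minor (m n r : ℕ) (A : Matrix (Fin m) (Fin n) ℤ)
    (hr : (A.map ((↑) : ℤ → ℚ)).rank = r) :
    Finite ↥(Submodule.torsion ℤ ((Fin n → ℤ) ⧸ Submodule.span ℤ (Set.range A))) ∧
    ∀ (rows : Fin r → Fin m) (cols : Fin r → Fin n),
      (A.submatrix rows cols).det ≠ 0 →
      ((AddMonoid.exponent
          ↥(Submodule.torsion ℤ ((Fin n → ℤ) ⧸ Submodule.span ℤ (Set.range A)))) : ℤ) ∣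
        (A.submatrix rows cols).det := by
  refine ⟨Module.finite_of_fg_torsion _ torsion_isTorsion, fun rows cols hdet => ?_⟩
  rw [AddGroup.exponent_dvd_iff_forall_zsmul_eq_zero]
  rintro ⟨t, ht⟩
  obtain ⟨a, ha⟩ := (mem_torsion_iff t).1 ht
  obtain ⟨x, rfl⟩ := Submodule.Quotient.mk_surjective _ t
  rw [← Submodule.Quotient.mk_smul, Submodule.Quotient.mk_eq_zero] at ha
  ext
  rw [coe_smul, ← Submodule.Quotient.mk_smul, coe_zero, Submodule.Quotient.mk_eq_zero]
  exact det_smul_mem_span_row_of_smul_mem_span_row (f := Int.castRingHom ℚ) Int.cast_injective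
    (hr.trans (Fintype.card_fin r).symm) hdet (nonZeroDivisors.coe_ne_zero a) ha
end

section
/- Let A be a non-zero m×n integer matrix and set ‖A‖ = max{|a_{ij}|} over all entries of A. Let M = ℤⁿ/U, where U ⊆ ℤⁿ is the subgroup generated by the rows of A, and let τ be the exponent of the torsion subgroup of M. Then τ ≤ n^{n/2}·‖A‖ⁿ; consequently the bit size log₂(τ) of the torsion exponent is bounded by n·log₂(n·‖A‖). -/
/-!
Choose rows `σ` of `A` forming a basis of its rational row space and columns `ρ` making the
square minor `C = A[σ, ρ]` nonsingular. If `k • x` lies in the row lattice for some `k ≠ 0`,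
then `x = q ᵥ* A[σ, ·]` over `ℚ`, so `x ∘ ρ = q ᵥ* C` and `det C • q = (x ∘ ρ) ᵥ* adj C` is
integral: `det C` kills the torsion. Hence `τ ∣ det C`, and Hadamard's inequality bounds the
`r × r` minor (`r ≤ n`) with entries at most `‖A‖` by `(√r ‖A‖)ʳ ≤ n^(n/2) ‖A‖ⁿ`.
-/

open Matrix Submodule Function

theorem Matrix.abs_det_le_prod_norm_row {ι : Type*} [Fintype ι] [DecidableEq ι]
    (M : Matrix ι ι ℝ) : |M.det| ≤ ∏ i, ‖WithLp.toLp 2 (M i)‖ := by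
  let e := Fintype.equivFin ι
  have : Fact (Module.finrank ℝ (EuclideanSpace ℝ ι) = Fintype.card ι) := ⟨finrank_euclideanSpace⟩
  let b := (EuclideanSpace.basisFun ι ℝ).reindex e
  let v : Fin (Fintype.card ι) → EuclideanSpace ℝ ι := fun k => WithLp.toLp 2 (M (e.symm k))
  have hdet : b.toBasis.det v = M.det := by
    rw [OrthonormalBasis.reindex_toBasis, Module.Basis.det_reindex, Module.Basis.det_apply,
      ← det_transpose]
    congr 1
    ext i j
    simp [v, Module.Basis.toMatrix_apply]
  have hadamard := b.toBasis.orientation.abs_volumeForm_apply_le v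
  rw [b.toBasis.orientation.volumeForm_robust' b, hdet] at hadamard
  simpa [v, e.symm.prod_comp fun i => ‖WithLp.toLp 2 (M i)‖] using hadamard

theorem EuclideanSpace.norm_toLp_le_sqrt_card_mul {ι : Type*} [Fintype ι] {v : ι → ℝ} {x : ℝ}
    (hv : ∀ i, |v i| ≤ x) : ‖WithLp.toLp 2 v‖ ≤ √(Fintype.card ι) * x := by
  rcases isEmpty_or_nonempty ι with hι | ⟨⟨i₀⟩⟩
  · simp [Subsingleton.elim v 0]
  have hx : 0 ≤ x := (abs_nonneg _).trans (hv i₀)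
  rw [EuclideanSpace.norm_eq, ← Real.sqrt_sq hx, ← Real.sqrt_mul (Nat.cast_nonneg _)]
  gcongr
  calc ∑ i, ‖v i‖ ^ 2 ≤ ∑ _i : ι, x ^ 2 := by
        gcongr with i
        exact (Real.norm_eq_abs _).trans_le (hv i)
    _ = _ := by simp

theorem Matrix.abs_det_le_of_abs_le {ι : Type*} [Fintype ι] [DecidableEq ι]
    (M : Matrix ι ι ℝ) {x : ℝ} (hM : ∀ i j, |M i j| ≤ x) :
    |M.det| ≤ (√(Fintype.card ι) * x) ^ Fintype.card ι := by
  calc |M.det| ≤ ∏ i, ‖WithLp.toLp 2 (M i)‖ := M.abs_det_le_prod_norm_row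
    _ ≤ ∏ _i : ι, √(Fintype.card ι) * x :=
        Finset.prod_le_prod (fun _ _ => norm_nonneg _)
          fun i _ => EuclideanSpace.norm_toLp_le_sqrt_card_mul (hM i)
    _ = _ := by simp

theorem Matrix.injective_of_det_submatrix_ne_zero {R m n κ : Type*} [CommRing R] [Fintype κ]
    [DecidableEq κ] {A : Matrix m n R} {σ : κ → m} {ρ : κ → n}
    (h : (A.submatrix σ ρ).det ≠ 0) : Injective ρ := by
  intro i j hij
  by_contra hne
  exact h (det_zero_of_column_eq hne fun k => by simp [hij])

theorem Matrix.exists_det_submatrix_ne_zero_of_linearIndependent {K ι n : Type*} [Field K]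
    [Fintype ι] [DecidableEq ι] [Fintype n] (B : Matrix ι n K) (hB : LinearIndependent K B.row) :
    ∃ ρ : ι → n, (B.submatrix id ρ).det ≠ 0 := by
  have hcols : span K (Set.range B.col) = ⊤ := by
    apply eq_top_of_finrank_eq
    rw [← rank_eq_finrank_span_cols, rank_eq_finrank_span_row, finrank_span_eq_card hB,
      Module.finrank_fintype_fun_eq_card]
  obtain ⟨κ, a, -, hspan, hind⟩ := exists_linearIndependent' K B.col
  let e := (Pi.basisFun K ι).indexEquiv (Module.Basis.mk hind (by rw [hspan, hcols]))
  exact ⟨a ∘ e, ((isUnit_iff_isUnit_det _).mp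
    (linearIndependent_cols_iff_isUnit.mp (hind.comp e e.injective))).ne_zero⟩

theorem Matrix.exists_det_submatrix_ne_zero_and_span_row_eq {K m n : Type*} [Field K] [Finite m]
    [Fintype n] (A : Matrix m n K) :
    ∃ (r : ℕ) (σ : Fin r → m) (ρ : Fin r → n), (A.submatrix σ ρ).det ≠ 0 ∧
      span K (Set.range (A.submatrix σ id).row) = span K (Set.range A.row) := by
  obtain ⟨κ, a, ha, hspan, hind⟩ := exists_linearIndependent' K A.row
  have := Finite.of_injective a ha
  let e := (Finite.equivFin κ).symm
  obtain ⟨ρ, hρ⟩ := (A.submatrix (a ∘ e) id).exists_det_submatrix_ne_zero_of_linearIndependent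
    (hind.comp e e.injective)
  refine ⟨_, a ∘ e, ρ, hρ, ?_⟩
  rw [← hspan, ← e.surjective.range_comp]
  rfl

theorem RingHom.comp_vecMul {R S m n : Type*} [NonAssocSemiring R] [NonAssocSemiring S]
    [Fintype m] (f : R →+* S) (v : m → R) (M : Matrix m n R) :
    f ∘ (v ᵥ* M) = (f ∘ v) ᵥ* M.map f :=
  funext (f.map_vecMul M v)

theorem Matrix.comp_mem_span_row_of_smul_mem {R K m n : Type*} [CommRing R] [Field K]
    [Fintype m] {f : R →+* K} (hf : Injective f) (A : Matrix m n R) {x : n → R} {k : R}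
    (hk : k ≠ 0) (hx : k • x ∈ span R (Set.range A.row)) :
    f ∘ x ∈ span K (Set.range (A.map f).row) := by
  rw [← range_vecMulLinear] at hx ⊢
  obtain ⟨c, hc : c ᵥ* A = k • x⟩ := hx
  have hfk : f k ≠ 0 := (map_ne_zero_iff f hf).mpr hk
  refine ⟨(f k)⁻¹ • (f ∘ c), ?_⟩
  change ((f k)⁻¹ • (f ∘ c)) ᵥ* A.map f = f ∘ x
  rw [smul_vecMul, ← f.comp_vecMul, hc]
  ext j
  simp [hfk]

theorem Matrix.det_submatrix_smul_mem_span_row {R S κ n : Type*} [CommRing R] [CommRing S]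
    [Fintype κ] [DecidableEq κ] {f : R →+* S} (hf : Injective f) (B : Matrix κ n R)
    (ρ : κ → n) {x : n → R} (hx : f ∘ x ∈ span S (Set.range (B.map f).row)) :
    (B.submatrix id ρ).det • x ∈ span R (Set.range B.row) := by
  rw [← range_vecMulLinear] at hx ⊢
  obtain ⟨q, hq : q ᵥ* B.map f = f ∘ x⟩ := hx
  set C := B.submatrix id ρ
  have hxρ : f ∘ x ∘ ρ = q ᵥ* C.map f := by
    rw [← comp_assoc, ← hq]
    rfl
  have hc : f ∘ ((x ∘ ρ) ᵥ* C.adjugate) = f C.det • q := by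
    rw [f.comp_vecMul, hxρ, show C.adjugate.map f = (C.map f).adjugate from f.map_adjugate C,
      vecMul_vecMul, mul_adjugate, vecMul_smul, vecMul_one, RingHom.map_det]
    rfl
  refine ⟨(x ∘ ρ) ᵥ* C.adjugate, hf.comp_left ?_⟩
  change f ∘ ((x ∘ ρ) ᵥ* C.adjugate ᵥ* B) = f ∘ (C.det • x)
  rw [f.comp_vecMul, hc, smul_vecMul, hq]
  ext j
  simp

theorem AddMonoid.exponent_torsion_quotient_dvd {M : Type*} [AddCommGroup M]
    (U : Submodule ℤ M) (d : ℤ) (h : ∀ (x : M) (k : ℤ), k ≠ 0 → k • x ∈ U → d • x ∈ U) :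
    AddMonoid.exponent (torsion ℤ (M ⧸ U)) ∣ d.natAbs := by
  refine AddMonoid.exponent_dvd_of_forall_nsmul_eq_zero fun ⟨y, ⟨k, hk⟩⟩ => ?_
  obtain ⟨x, rfl⟩ := Submodule.Quotient.mk_surjective U y
  rw [Submonoid.smul_def, ← Submodule.Quotient.mk_smul, Submodule.Quotient.mk_eq_zero] at hk
  have hdx := h x k (nonZeroDivisors.coe_ne_zero k) hk
  ext
  simp only [AddSubmonoidClass.coe_nsmul, ZeroMemClass.coe_zero, natAbs_nsmul_eq_zero]
  rwa [← Submodule.Quotient.mk_smul, Submodule.Quotient.mk_eq_zero]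

theorem Matrix.exists_det_submatrix_ne_zero_and_exponent_torsion_dvd {m n : Type*} [Fintype m]
    [Fintype n] (A : Matrix m n ℤ) :
    ∃ (r : ℕ) (σ : Fin r → m) (ρ : Fin r → n), (A.submatrix σ ρ).det ≠ 0 ∧
      AddMonoid.exponent (torsion ℤ ((n → ℤ) ⧸ span ℤ (Set.range A))) ∣
        (A.submatrix σ ρ).det.natAbs := by
  have hf := (Int.castRingHom ℚ).injective_int
  obtain ⟨r, σ, ρ, hdet, hσ⟩ :=
    (A.map (Int.castRingHom ℚ)).exists_det_submatrix_ne_zero_and_span_row_eq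
  refine ⟨r, σ, ρ, ?_, AddMonoid.exponent_torsion_quotient_dvd _ _ fun x k hk hkx => ?_⟩
  · rw [← Int.cast_ne_zero (α := ℚ), Int.cast_det]
    exact hdet
  · have hx := A.comp_mem_span_row_of_smul_mem hf hk hkx
    rw [← hσ] at hx
    exact span_mono (Set.range_comp_subset_range σ A)
      ((A.submatrix σ id).det_submatrix_smul_mem_span_row hf ρ hx)

theorem Matrix.natAbs_det_le_of_abs_le {ι : Type*} [Fintype ι] [DecidableEq ι]
    (C : Matrix ι ι ℤ) {x : ℝ} (hC : ∀ i j, |(C i j : ℝ)| ≤ x) :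
    (C.det.natAbs : ℝ) ≤ (√(Fintype.card ι) * x) ^ Fintype.card ι := by
  rw [Nat.cast_natAbs, Int.cast_abs, Int.cast_det]
  exact abs_det_le_of_abs_le _ hC

theorem Real.sqrt_mul_pow_le_sqrt_mul_pow_of_le {r n : ℕ} {x : ℝ} (hx : 1 ≤ x) (hrn : r ≤ n) :
    (√r * x) ^ r ≤ (√n * x) ^ n := by
  rcases Nat.eq_zero_or_pos n with rfl | hn
  · rw [Nat.le_zero.mp hrn]
  calc (√r * x) ^ r ≤ (√n * x) ^ r := by gcongr
    _ ≤ (√n * x) ^ n :=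
        pow_le_pow_right₀ (one_le_mul_of_one_le_of_one_le
          (Real.one_le_sqrt.mpr (by exact_mod_cast hn)) hx) hrn

/-- For a non-zero `m × n` integer matrix `A` with `‖A‖ = N` the maximal
absolute value of its entries, the exponent `τ` of the torsion subgroup of
`M = ℤⁿ / (row span of A)` satisfies `τ ≤ n^(n/2) · Nⁿ`, and consequently
`log₂ τ ≤ n · log₂ (n · N)`. -/
theorem torsion_exponent_bound (m n : ℕ) (A : Matrix (Fin m) (Fin n) ℤ) (hA : A ≠ 0)
    (N : ℕ) (hN : N = Finset.univ.sup fun p : Fin m × Fin n => (A p.1 p.2).natAbs) :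
    ((AddMonoid.exponent
        ↥(Submodule.torsion ℤ ((Fin n → ℤ) ⧸ Submodule.span ℤ (Set.range A)))) : ℝ) ≤
      (n : ℝ) ^ ((n : ℝ) / 2) * (N : ℝ) ^ n ∧
    Real.logb 2
        ((AddMonoid.exponent
          ↥(Submodule.torsion ℤ ((Fin n → ℤ) ⧸ Submodule.span ℤ (Set.range A)))) : ℝ) ≤
      (n : ℝ) * Real.logb 2 ((n : ℝ) * (N : ℝ)) := by
  obtain ⟨i₀, j₀, hA₀⟩ : ∃ i j, A i j ≠ 0 := by
    by_contra! h
    exact hA (Matrix.ext h)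
  have hAN : ∀ i j, |(A i j : ℝ)| ≤ N := fun i j => by
    rw [← Int.cast_abs, ← Nat.cast_natAbs, hN, Nat.cast_le]
    exact Finset.le_sup (f := fun p : Fin m × Fin n => (A p.1 p.2).natAbs) (Finset.mem_univ (i, j))
  have hN₁ : (1 : ℝ) ≤ N := le_trans (by exact_mod_cast Int.one_le_abs hA₀) (hAN i₀ j₀)
  obtain ⟨r, σ, ρ, hdet, hτ⟩ := A.exists_det_submatrix_ne_zero_and_exponent_torsion_dvd
  set τ := AddMonoid.exponent (torsion ℤ ((Fin n → ℤ) ⧸ span ℤ (Set.range A)))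
  have hrn : r ≤ n := by
    simpa using Fintype.card_le_of_injective ρ (injective_of_det_submatrix_ne_zero hdet)
  have hτ_le : (τ : ℝ) ≤ (√n * N) ^ n :=
    calc (τ : ℝ) ≤ (A.submatrix σ ρ).det.natAbs := by
          exact_mod_cast Nat.le_of_dvd (Int.natAbs_pos.mpr hdet) hτ
      _ ≤ (√r * N) ^ r := by
          simpa only [Fintype.card_fin] using
            natAbs_det_le_of_abs_le (A.submatrix σ ρ) fun i j => hAN (σ i) (ρ j)
      _ ≤ (√n * N) ^ n := Real.sqrt_mul_pow_le_sqrt_mul_pow_of_le hN₁ hrn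
  refine ⟨hτ_le.trans_eq ?_, ?_⟩
  · rw [mul_pow, Real.sqrt_eq_rpow, ← Real.rpow_natCast, ← Real.rpow_mul (by positivity)]
    ring_nf
  · rw [← Real.logb_pow]
    refine Real.logb_le_logb_of_le one_lt_two ?_ (hτ_le.trans ?_)
    · exact_mod_cast Nat.pos_of_dvd_of_pos hτ (Int.natAbs_pos.mpr hdet)
    · gcongr
      exact Real.sqrt_le_self_iff.mpr (Or.inr (by exact_mod_cast j₀.pos))
end

section
/- Let R be a commutative ring which is generated as a ℤ-module by elements g₀, …, g_n, let A = (a_{ℓk}) be an m×(n+1) integer matrix whose rows generate the syzygy module Syz_ℤ(g₀,…,g_n) = {(v₀,…,v_n) ∈ ℤ^{n+1} : v₀g₀ + ⋯ + v_ng_n = 0}, and let c_{ijk} ∈ ℤ be structure constants satisfying g_i·g_j = ∑_{k=0}^{n} c_{ijk} g_k for all i, j = 0,…,n. Let f₁,…,f_p ∈ R with f_k = ∑_{j=0}^{n} b_{kj} g_j for integers b_{kj}. Then for any integers d_{ki} (k = 1,…,p, i = 0,…,n), the elements h_k = ∑_{i=0}^{n} d_{ki} g_i satisfy f₁h₁ +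 ⋯ + f_p h_p = 0 in R if and only if there exist integers w₁,…,w_m such that for every ℓ = 0,…,n one has ∑_{k=1}^{p} ∑_{i=0}^{n} ∑_{j=0}^{n} d_{ki} b_{kj} c_{ijℓ} = ∑_{j=1}^{m} w_j a_{jℓ}. -/
/-! Expanding each product `f_k h_k` with the structure constants writes `∑ f_k h_k` as the
combination `∑_ℓ (∑_{k,i,j} d_{ki} b_{kj} c_{ijℓ}) g_ℓ`; this vanishes exactly when its coefficient
vector is a syzygy, i.e. an integer combination of the rows of `A`. -/

open Finset

theorem sum_zsmul_mul_sum_zsmul {R ι : Type*} [Ring R] [Fintype ι] {g : ι → R}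
    {c : ι → ι → ι → ℤ} (hc : ∀ i j, g i * g j = ∑ l, c i j l • g l) (x y : ι → ℤ) :
    (∑ i, x i • g i) * (∑ j, y j • g j) = ∑ l, (∑ i, ∑ j, x i * y j * c i j l) • g l := by
  simp_rw [sum_mul, mul_sum, smul_mul_smul, hc, smul_sum, smul_smul, sum_smul]
  exact sum_comm_cycle

theorem solving_linear_systems_general (R : Type*) [CommRing R] (n m p : ℕ)
    (g : Fin (n + 1) → R)
    (A : Matrix (Fin m) (Fin (n + 1)) ℤ)
    (hA : ∀ v : Fin (n + 1) → ℤ,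
      (∑ i, v i • g i = 0) ↔ ∃ w : Fin m → ℤ, v = ∑ j, w j • A j)
    (c : Fin (n + 1) → Fin (n + 1) → Fin (n + 1) → ℤ)
    (hc : ∀ i j, g i * g j = ∑ k, c i j k • g k)
    (b : Fin p → Fin (n + 1) → ℤ) (d : Fin p → Fin (n + 1) → ℤ) :
    (∑ k, (∑ j, b k j • g j) * (∑ i, d k i • g i) = 0) ↔
      ∃ w : Fin m → ℤ, ∀ l : Fin (n + 1),
        (∑ k, ∑ i, ∑ j, d k i * b k j * c i j l) = ∑ j, w j * A j l := by
  have expand : ∑ k, (∑ j, b k j • g j) * (∑ i, d k i • g i)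
      = ∑ l, (∑ k, ∑ i, ∑ j, d k i * b k j * c i j l) • g l := by
    simp_rw [mul_comm (∑ j, b _ j • g j), sum_zsmul_mul_sum_zsmul hc, sum_smul]
    exact sum_comm
  rw [expand, hA]
  refine exists_congr fun w => ?_
  simp only [funext_iff, Finset.sum_apply, Pi.smul_apply, smul_eq_mul]

/-- For an explicitly given finite `ℤ`-algebra `R` (generators `g₀,…,gₙ` of the
`ℤ`-module `R`, a matrix `A` whose rows generate the syzygy module, and structure constants
`c i j k`), a tuple `(h₁,…,h_p)` with `h_k = ∑ d k i • g i` solves the linear equation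
`f₁·h₁ + ⋯ + f_p·h_p = 0` (where `f_k = ∑ b k j • g j`) if and only if there are integers
`w₁,…,w_m` with `∑_{k,i,j} d k i · b k j · c i j ℓ = ∑_j w j · a j ℓ` for all `ℓ`. -/
theorem solving_linear_systems (R : Type*) [CommRing R] (n m p : ℕ)
    (g : Fin (n + 1) → R) (hg : Submodule.span ℤ (Set.range g) = ⊤)
    (A : Matrix (Fin m) (Fin (n + 1)) ℤ)
    (hA : ∀ v : Fin (n + 1) → ℤ,
      (∑ i, v i • g i = 0) ↔ ∃ w : Fin m → ℤ, v = ∑ j, w j • A j)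
    (c : Fin (n + 1) → Fin (n + 1) → Fin (n + 1) → ℤ)
    (hc : ∀ i j, g i * g j = ∑ k, c i j k • g k)
    (b : Fin p → Fin (n + 1) → ℤ) (d : Fin p → Fin (n + 1) → ℤ) :
    (∑ k, (∑ j, b k j • g j) * (∑ i, d k i • g i) = 0) ↔
      ∃ w : Fin m → ℤ, ∀ l : Fin (n + 1),
        (∑ k, ∑ i, ∑ j, d k i * b k j * c i j l) = ∑ j, w j * A j l :=
  solving_linear_systems_general R n m p g A hA c hc b d
end

section
/- Let M be a ℤ-module, let φ : M → M be a ℤ-linear endomorphism, and let i be a positive integer. Suppose the quotient Ker(φ^{i+1})/Ker(φ^i) is a torsion module, i.e., for every x ∈ Ker(φ^{i+1}) there exists a non-zero integer c with c·x ∈ Ker(φ^i). Then Ker(φ^{i+2})/Ker(φ^{i+1}) is also a torsion module: for every x ∈ Ker(φ^{i+2}) there exists a non-zero integer c with c·x ∈ Ker(φ^{i+1}). -/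
namespace Module.End

theorem mem_ker_pow_succ_iff {R M : Type*} [Semiring R] [AddCommMonoid M] [Module R M]
    (f : Module.End R M) (n : ℕ) (x : M) :
    x ∈ LinearMap.ker (f ^ (n + 1)) ↔ f x ∈ LinearMap.ker (f ^ n) := by
  rw [LinearMap.mem_ker, LinearMap.mem_ker, pow_succ, mul_apply]

end Module.End

theorem ker_quotient_torsion_step_general (M : Type*) [AddCommGroup M] (φ : M →ₗ[ℤ] M)
    (i : ℕ)
    (h : ∀ x ∈ LinearMap.ker (φ ^ (i + 1)),
      ∃ c : ℤ, c ≠ 0 ∧ c • x ∈ LinearMap.ker (φ ^ i)) :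
    ∀ x ∈ LinearMap.ker (φ ^ (i + 2)),
      ∃ c : ℤ, c ≠ 0 ∧ c • x ∈ LinearMap.ker (φ ^ (i + 1)) := by
  intro x hx
  obtain ⟨c, hc, hcφx⟩ := h (φ x) ((Module.End.mem_ker_pow_succ_iff φ (i + 1) x).1 hx)
  refine ⟨c, hc, (Module.End.mem_ker_pow_succ_iff φ i (c • x)).2 ?_⟩
  rwa [map_smul]

/-- Let `φ` be a `ℤ`-linear endomorphism of a `ℤ`-module `M` and `i` a positive
integer. If `Ker(φ^(i+1))/Ker(φ^i)` is a torsion module, then so is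
`Ker(φ^(i+2))/Ker(φ^(i+1))`. -/
theorem ker_quotient_torsion_step (M : Type*) [AddCommGroup M] (φ : M →ₗ[ℤ] M)
    (i : ℕ) (hi : 0 < i)
    (h : ∀ x ∈ LinearMap.ker (φ ^ (i + 1)),
      ∃ c : ℤ, c ≠ 0 ∧ c • x ∈ LinearMap.ker (φ ^ i)) :
    ∀ x ∈ LinearMap.ker (φ ^ (i + 2)),
      ∃ c : ℤ, c ≠ 0 ∧ c • x ∈ LinearMap.ker (φ ^ (i + 1)) :=
  ker_quotient_torsion_step_general M φ i h
end

section
/- (Macaulay's Basis Theorem for finite ℤ-algebras) Let P = ℤ[x₁,…,x_n], let σ be a term ordering on the monomials of P, and let I ⊆ P be an ideal such that P/I is finitely generated as a ℤ-module. Let L be the set of all monomials t such that there exists a non-zero polynomial f ∈ I whose σ-leading coefficient is 1 and whose σ-leading term is t (i.e., L is the set of monic leading monomials of I). Then the residue classes of the monomials in 𝕋ⁿ ∖ L generate the ℤ-module P/I. -/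
/-!
Induct on the monomial `t` along the well-order `σ`. If `t` is not a monic leading monomial of
`I`, its class is one of the generators. Otherwise some `f ∈ I` has leading term `t` with leading
coefficient `1`, so `t ≡ t - f (mod I)`, and every monomial of `t - f` is `σ`-smaller than `t`.
-/

open MvPolynomial

theorem MvPolynomial.map_mem_of_forall_mem_support {σ R M : Type*} [CommSemiring R]
    [AddCommMonoid M] [Module R M] (φ : MvPolynomial σ R →ₗ[R] M) {N : Submodule R M}
    {p : MvPolynomial σ R} (h : ∀ s ∈ p.support, φ (monomial s 1) ∈ N) : φ p ∈ N := by
  rw [p.as_sum, map_sum]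
  refine N.sum_mem fun s hs => ?_
  rw [← mul_one (coeff s p), ← smul_eq_mul, ← smul_monomial, map_smul]
  exact N.smul_mem _ (h s hs)

namespace MonomialOrder

variable {σ R : Type*} [CommRing R] (m : MonomialOrder σ)

def monicLeadingMonomials (I : Ideal (MvPolynomial σ R)) : Set (σ →₀ ℕ) :=
  {t | ∃ f ∈ I, f ≠ 0 ∧ coeff t f = 1 ∧ ∀ s ∈ f.support, m.toSyn s ≤ m.toSyn t}

theorem toSyn_lt_of_mem_support_monomial_one_sub {f : MvPolynomial σ R} {t : σ →₀ ℕ}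
    (hc : coeff t f = 1) (hle : ∀ s ∈ f.support, m.toSyn s ≤ m.toSyn t)
    {s : σ →₀ ℕ} (hs : s ∈ (monomial t 1 - f).support) : m.toSyn s < m.toSyn t := by
  classical
  rw [mem_support_iff, coeff_sub, coeff_monomial] at hs
  have hst : s ≠ t := by
    rintro rfl
    simp [hc] at hs
  refine (hle s ?_).lt_of_ne (m.toSyn.injective.ne hst)
  rw [mem_support_iff]
  simpa [if_neg hst.symm] using hs

theorem mk_monomial_mem_span_compl_monicLeadingMonomials (I : Ideal (MvPolynomial σ R))
    (t : σ →₀ ℕ) :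
    Ideal.Quotient.mk I (monomial t 1) ∈ Submodule.span R
      ((fun t => Ideal.Quotient.mk I (monomial t 1)) '' (m.monicLeadingMonomials I)ᶜ) := by
  induction t using (InvImage.wf m.toSyn wellFounded_lt).induction with
  | _ t ih =>
    by_cases ht : t ∈ m.monicLeadingMonomials I
    · obtain ⟨f, hfI, -, hc, hle⟩ := ht
      have hmk : Ideal.Quotient.mk I (monomial t 1) = Ideal.Quotient.mk I (monomial t 1 - f) := by
        rw [map_sub, Ideal.Quotient.eq_zero_iff_mem.2 hfI, sub_zero]
      rw [hmk, ← Ideal.Quotient.mkₐ_eq_mk R, ← AlgHom.toLinearMap_apply]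
      exact map_mem_of_forall_mem_support _ fun s hs =>
        ih s (m.toSyn_lt_of_mem_support_monomial_one_sub hc hle hs)
    · exact Submodule.subset_span ⟨t, ht, rfl⟩

theorem span_mk_monomial_compl_monicLeadingMonomials (I : Ideal (MvPolynomial σ R)) :
    Submodule.span R
      ((fun t => Ideal.Quotient.mk I (monomial t 1)) '' (m.monicLeadingMonomials I)ᶜ) = ⊤ := by
  refine eq_top_iff.2 fun x _ => ?_
  obtain ⟨p, rfl⟩ := Ideal.Quotient.mk_surjective x
  rw [← Ideal.Quotient.mkₐ_eq_mk R, ← AlgHom.toLinearMap_apply]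
  exact map_mem_of_forall_mem_support _ fun s _ =>
    m.mk_monomial_mem_span_compl_monicLeadingMonomials I s

end MonomialOrder

theorem macaulay_basis_theorem_general (n : ℕ) (m : MonomialOrder (Fin n))
    (I : Ideal (MvPolynomial (Fin n) ℤ)) :
    Submodule.span ℤ
      ((fun t : Fin n →₀ ℕ => Ideal.Quotient.mk I (MvPolynomial.monomial t 1)) ''
        {t : Fin n →₀ ℕ | ¬ ∃ f ∈ I, f ≠ 0 ∧ MvPolynomial.coeff t f = 1 ∧
          ∀ s ∈ f.support, m.toSyn s ≤ m.toSyn t}) = ⊤ :=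
  m.span_mk_monomial_compl_monicLeadingMonomials I

/-- Macaulay's Basis Theorem for finite `ℤ`-algebras: Let `P = ℤ[x₁,…,xₙ]`,
let `m` be a monomial (term) ordering, and let `I ⊆ P` be an ideal such that `P/I` is a
finitely generated `ℤ`-module. Let `L` be the set of monic leading monomials of `I`, i.e. the
set of monomials `t` for which some non-zero `f ∈ I` has leading term `t` with leading
coefficient `1` (equivalently, `coeff t f = 1` and every monomial in the support of `f` is
`≼[m] t`). Then the residue classes of the monomials not in `L` generate the `ℤ`-module
`P/I`. -/
theorem macaulay_basis_theorem (n : ℕ) (m : MonomialOrder (Fin n))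
    (I : Ideal (MvPolynomial (Fin n) ℤ))
    (hfin : Module.Finite ℤ ((MvPolynomial (Fin n) ℤ) ⧸ I)) :
    Submodule.span ℤ
      ((fun t : Fin n →₀ ℕ => Ideal.Quotient.mk I (MvPolynomial.monomial t 1)) ''
        {t : Fin n →₀ ℕ | ¬ ∃ f ∈ I, f ≠ 0 ∧ MvPolynomial.coeff t f = 1 ∧
          ∀ s ∈ f.support, m.toSyn s ≤ m.toSyn t}) = ⊤ :=
  macaulay_basis_theorem_general n m I
end
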